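/- Consider the linear system Ax = b where A ∈ ℝ^{N×N} is symmetric positive definite with distinct eigenvalues 0 < λ_1 < ... < λ_N and orthonormal eigenvectors v_1, ..., v_N. Let the iterates be generated by the minimal gradient (MG) method x_{n+1} = x_n − α_n^MG g_n, where g_n = A x_n − b and α_n^MG = (g_nᵀ A g_n)/(g_nᵀ A² g_n). Write g_n = Σ_{i=1}^N ζ_{i,n} v_i and assume ζ_{1,0} ≠ 0 and ζ_{N,0} ≠ 0 (hence g_n ≠ 0 for all n). Define α_n^A2 = (1/α_{n−1}^MG + 1/α_n^MG)^{−1}. Then lim_{n→∞} α_n^A2 = 1/(λ_1 + λ_N). -/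

import Mathlib

open Filter Topology Matrix

/-- Core dynamical lemma: for the weight dynamics `w (n+1) i ∝ w n i * (c n - lam i)^2`
where `c n` is the `w n`-weighted mean of `lam`, and with positive weights at the extreme
indices, the sum of two consecutive means tends to `lam i1 + lam iN`.
The proof uses the Bhatia–Davis inequality to show `w₁ŵN/S²` is nondecreasing. -/
private theorem mg_core {N : ℕ} (lam : Fin N → ℝ) (i1 iN : Fin N)
    (hpos1 : 0 < lam i1)
    (hlow : ∀ i, lam i1 ≤ lam i) (hhigh : ∀ i, lam i ≤ lam iN)
    (h1N : lam i1 < lam iN)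
    (w : ℕ → Fin N → ℝ) (hw : ∀ n i, 0 ≤ w n i)
    (hw1 : ∀ n, 0 < w n i1) (hwN : ∀ n, 0 < w n iN)
    (c : ℕ → ℝ)
    (hc : ∀ n, c n * (∑ i, w n i) = ∑ i, w n i * lam i)
    (hrec : ∀ n i, w (n + 1) i * (c n) ^ 2 = w n i * (c n - lam i) ^ 2) :
    Tendsto (fun n => c n + c (n + 1)) atTop (𝓝 (lam i1 + lam iN)) := by
  have hS : ∀ n, 0 < ∑ i, w n i := fun n =>
    Finset.sum_pos' (fun i _ => hw n i) ⟨i1, Finset.mem_univ _, hw1 n⟩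
  -- mean strictly between extreme eigenvalues
  have hcl : ∀ n, lam i1 < c n := by
    intro n
    have h1 : (c n - lam i1) * (∑ i, w n i) = ∑ i, w n i * (lam i - lam i1) := by
      have h2 : ∑ i, w n i * (lam i - lam i1)
          = (∑ i, w n i * lam i) - lam i1 * ∑ i, w n i := by
        rw [Finset.mul_sum, ← Finset.sum_sub_distrib]
        exact Finset.sum_congr rfl fun i _ => by ring
      rw [h2, ← hc n]; ring
    have h2 : w n iN * (lam iN - lam i1) ≤ ∑ i, w n i * (lam i - lam i1) :=
      Finset.single_le_sum (f := fun i => w n i * (lam i - lam i1))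
        (fun i _ => mul_nonneg (hw n i) (by linarith [hlow i])) (Finset.mem_univ iN)
    have h3 : 0 < w n iN * (lam iN - lam i1) := mul_pos (hwN n) (by linarith)
    nlinarith [hS n]
  have hcu : ∀ n, c n < lam iN := by
    intro n
    have h1 : (lam iN - c n) * (∑ i, w n i) = ∑ i, w n i * (lam iN - lam i) := by
      have h2 : ∑ i, w n i * (lam iN - lam i)
          = lam iN * (∑ i, w n i) - ∑ i, w n i * lam i := by
        rw [Finset.mul_sum, ← Finset.sum_sub_distrib]
        exact Finset.sum_congr rfl fun i _ => by ring
      rw [h2, ← hc n]; ring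
    have h2 : w n i1 * (lam iN - lam i1) ≤ ∑ i, w n i * (lam iN - lam i) :=
      Finset.single_le_sum (f := fun i => w n i * (lam iN - lam i))
        (fun i _ => mul_nonneg (hw n i) (by linarith [hhigh i])) (Finset.mem_univ i1)
    have h3 : 0 < w n i1 * (lam iN - lam i1) := mul_pos (hw1 n) (by linarith)
    nlinarith [hS n]
  have hc0 : ∀ n, 0 < c n := fun n => lt_trans hpos1 (hcl n)
  -- D, E : second moment and Bhatia-Davis defect
  have hD : ∀ n, 0 < ∑ i, w n i * (c n - lam i) ^ 2 := by
    intro n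
    refine Finset.sum_pos' (fun i _ => mul_nonneg (hw n i) (sq_nonneg _))
      ⟨i1, Finset.mem_univ _, mul_pos (hw1 n) (pow_pos (by linarith [hcl n]) 2)⟩
  have hE : ∀ n, 0 ≤ ∑ i, w n i * ((lam i - lam i1) * (lam iN - lam i)) := fun n =>
    Finset.sum_nonneg fun i _ =>
      mul_nonneg (hw n i) (mul_nonneg (by linarith [hlow i]) (by linarith [hhigh i]))
  have hzero : ∀ n, ∑ i, w n i * (c n - lam i) = 0 := by
    intro n
    have h2 : ∑ i, w n i * (c n - lam i)
        = c n * (∑ i, w n i) - ∑ i, w n i * lam i := by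
      rw [Finset.mul_sum, ← Finset.sum_sub_distrib]
      exact Finset.sum_congr rfl fun i _ => by ring
    rw [h2, hc n, sub_self]
  -- Bhatia–Davis identity : D + E = (c - λ₁)(λN - c) S
  have hDE : ∀ n, (∑ i, w n i * (c n - lam i) ^ 2)
      + (∑ i, w n i * ((lam i - lam i1) * (lam iN - lam i)))
      = (c n - lam i1) * (lam iN - c n) * ∑ i, w n i := by
    intro n
    have h1 : (∑ i, w n i * (c n - lam i) ^ 2)
        + (∑ i, w n i * ((lam i - lam i1) * (lam iN - lam i)))
        = ∑ i, (w n i * ((c n - lam i1) * (lam iN - c n))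
            - (lam i1 + lam iN - 2 * c n) * (w n i * (c n - lam i))) := by
      rw [← Finset.sum_add_distrib]
      exact Finset.sum_congr rfl fun i _ => by ring
    rw [h1, Finset.sum_sub_distrib, ← Finset.mul_sum, hzero n, mul_zero, sub_zero,
      ← Finset.sum_mul]
    ring
  -- the next total mass and next mean
  have hSnext : ∀ n, (∑ i, w (n + 1) i) * (c n) ^ 2
      = ∑ i, w n i * (c n - lam i) ^ 2 := by
    intro n
    rw [Finset.sum_mul]
    exact Finset.sum_congr rfl fun i _ => hrec n i
  have hUn : ∀ n, c (n + 1) * (∑ i, w n i * (c n - lam i) ^ 2)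
      = ∑ i, w n i * (c n - lam i) ^ 2 * lam i := by
    intro n
    calc c (n + 1) * (∑ i, w n i * (c n - lam i) ^ 2)
        = (c (n + 1) * ∑ i, w (n + 1) i) * (c n) ^ 2 := by rw [← hSnext n]; ring
      _ = (∑ i, w (n + 1) i * lam i) * (c n) ^ 2 := by rw [hc (n + 1)]
      _ = ∑ i, (w (n + 1) i * (c n) ^ 2) * lam i := by
          rw [Finset.sum_mul]; exact Finset.sum_congr rfl fun i _ => by ring
      _ = ∑ i, w n i * (c n - lam i) ^ 2 * lam i := by
          exact Finset.sum_congr rfl fun i _ => by rw [hrec n i]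
  -- key exact identity for c n + c (n+1)
  have hkey2 : ∀ n, (c n + c (n + 1) - (lam i1 + lam iN))
      * (∑ i, w n i * (c n - lam i) ^ 2)
      = ∑ i, w n i * (c n - lam i) * ((lam i - lam i1) * (lam iN - lam i)) := by
    intro n
    calc (c n + c (n + 1) - (lam i1 + lam iN)) * (∑ i, w n i * (c n - lam i) ^ 2)
        = (c n - (lam i1 + lam iN)) * (∑ i, w n i * (c n - lam i) ^ 2)
          + c (n + 1) * (∑ i, w n i * (c n - lam i) ^ 2) := by ring
      _ = (c n - (lam i1 + lam iN)) * (∑ i, w n i * (c n - lam i) ^ 2)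
          + ∑ i, w n i * (c n - lam i) ^ 2 * lam i := by rw [hUn n]
      _ = ∑ i, ((c n - (lam i1 + lam iN)) * (w n i * (c n - lam i) ^ 2)
          + w n i * (c n - lam i) ^ 2 * lam i) := by
          rw [Finset.mul_sum, ← Finset.sum_add_distrib]
      _ = ∑ i, (w n i * (c n - lam i) * ((lam i - lam i1) * (lam iN - lam i))
          + ((c n - lam i1) * (c n - lam iN)) * (w n i * (c n - lam i))) := by
          exact Finset.sum_congr rfl fun i _ => by ring
      _ = (∑ i, w n i * (c n - lam i) * ((lam i - lam i1) * (lam iN - lam i)))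
          + ((c n - lam i1) * (c n - lam iN)) * ∑ i, w n i * (c n - lam i) := by
          rw [Finset.sum_add_distrib, ← Finset.mul_sum]
      _ = ∑ i, w n i * (c n - lam i) * ((lam i - lam i1) * (lam iN - lam i)) := by
          rw [hzero n, mul_zero, add_zero]
  -- numerator bound
  have hTle : ∀ n, |∑ i, w n i * (c n - lam i) * ((lam i - lam i1) * (lam iN - lam i))|
      ≤ (lam iN - lam i1) * ∑ i, w n i * ((lam i - lam i1) * (lam iN - lam i)) := by
    intro n
    refine le_trans (Finset.abs_sum_le_sum_abs _ _) ?_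
    rw [Finset.mul_sum]
    refine Finset.sum_le_sum fun i _ => ?_
    have hab : 0 ≤ (lam i - lam i1) * (lam iN - lam i) :=
      mul_nonneg (by linarith [hlow i]) (by linarith [hhigh i])
    have habs : |c n - lam i| ≤ lam iN - lam i1 :=
      abs_le.2 ⟨by linarith [hhigh i, hcl n], by linarith [hlow i, hcu n]⟩
    rw [abs_mul, abs_mul, abs_of_nonneg (hw n i), abs_of_nonneg hab]
    have h1 : w n i * |c n - lam i| ≤ w n i * (lam iN - lam i1) :=
      mul_le_mul_of_nonneg_left habs (hw n i)
    calc w n i * |c n - lam i| * ((lam i - lam i1) * (lam iN - lam i))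
        ≤ w n i * (lam iN - lam i1) * ((lam i - lam i1) * (lam iN - lam i)) :=
          mul_le_mul_of_nonneg_right h1 hab
      _ = (lam iN - lam i1) * (w n i * ((lam i - lam i1) * (lam iN - lam i))) := by ring
  -- the Lyapunov function V
  set V : ℕ → ℝ := fun n => w n i1 * w n iN / (∑ i, w n i) ^ 2 with hV_def
  have hVpos : ∀ n, 0 < V n := fun n =>
    div_pos (mul_pos (hw1 n) (hwN n)) (pow_pos (hS n) 2)
  have hVle : ∀ n, V n ≤ 1 := by
    intro n
    rw [hV_def]
    rw [div_le_one (pow_pos (hS n) 2)]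
    have e1 : w n i1 ≤ ∑ i, w n i :=
      Finset.single_le_sum (fun i _ => hw n i) (Finset.mem_univ i1)
    have e2 : w n iN ≤ ∑ i, w n i :=
      Finset.single_le_sum (fun i _ => hw n i) (Finset.mem_univ iN)
    nlinarith [hw1 n, hwN n, hS n]
  have hVrec : ∀ n, V (n + 1) = V n *
      (1 + (∑ i, w n i * ((lam i - lam i1) * (lam iN - lam i)))
        / (∑ i, w n i * (c n - lam i) ^ 2)) ^ 2 := by
    intro n
    have hc2 : (0:ℝ) < (c n) ^ 2 := pow_pos (hc0 n) 2
    have hw1n : w (n + 1) i1 = w n i1 * (c n - lam i1) ^ 2 / (c n) ^ 2 :=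
      (eq_div_iff (ne_of_gt hc2)).2 (hrec n i1)
    have hwNn : w (n + 1) iN = w n iN * (c n - lam iN) ^ 2 / (c n) ^ 2 :=
      (eq_div_iff (ne_of_gt hc2)).2 (hrec n iN)
    have hSn1 : (∑ i, w (n + 1) i) = (∑ i, w n i * (c n - lam i) ^ 2) / (c n) ^ 2 :=
      (eq_div_iff (ne_of_gt hc2)).2 (hSnext n)
    have h1 : 1 + (∑ i, w n i * ((lam i - lam i1) * (lam iN - lam i)))
        / (∑ i, w n i * (c n - lam i) ^ 2)
        = ((c n - lam i1) * (lam iN - c n) * ∑ i, w n i)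
          / (∑ i, w n i * (c n - lam i) ^ 2) := by
      rw [← hDE n, add_div, div_self (ne_of_gt (hD n))]
    rw [h1]
    show w (n + 1) i1 * w (n + 1) iN / (∑ i, w (n + 1) i) ^ 2
        = w n i1 * w n iN / (∑ i, w n i) ^ 2 *
          (((c n - lam i1) * (lam iN - c n) * ∑ i, w n i)
            / (∑ i, w n i * (c n - lam i) ^ 2)) ^ 2
    rw [hw1n, hwNn, hSn1]
    have hs := ne_of_gt (hS n)
    have hd := ne_of_gt (hD n)
    have hcne := ne_of_gt hc2
    have hc' := ne_of_gt (hc0 n)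
    field_simp
    ring
  have hVmono : Monotone V := by
    refine monotone_nat_of_le_succ fun n => ?_
    rw [hVrec n]
    have hx : 0 ≤ (∑ i, w n i * ((lam i - lam i1) * (lam iN - lam i)))
        / (∑ i, w n i * (c n - lam i) ^ 2) := div_nonneg (hE n) (hD n).le
    nlinarith [hVpos n, mul_nonneg (hVpos n).le hx, mul_nonneg (hVpos n).le (mul_nonneg hx hx)]
  have hbdd : BddAbove (Set.range V) := by
    refine ⟨1, ?_⟩
    rintro y ⟨n, rfl⟩
    exact hVle n
  have htV : Tendsto V atTop (𝓝 (⨆ n, V n)) := tendsto_atTop_ciSup hVmono hbdd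
  have hlpos : 0 < ⨆ n, V n := lt_of_lt_of_le (hVpos 0) (le_ciSup hbdd 0)
  have htV1 : Tendsto (fun n => V (n + 1)) atTop (𝓝 (⨆ n, V n)) :=
    (tendsto_add_atTop_iff_nat 1).2 htV
  have hratio : Tendsto (fun n => V (n + 1) / V n) atTop (𝓝 1) := by
    have h2 := htV1.div htV (ne_of_gt hlpos)
    rwa [div_self (ne_of_gt hlpos)] at h2
  have hsq : Tendsto (fun n =>
      (1 + (∑ i, w n i * ((lam i - lam i1) * (lam iN - lam i)))
        / (∑ i, w n i * (c n - lam i) ^ 2)) ^ 2) atTop (𝓝 1) := by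
    refine hratio.congr fun n => ?_
    rw [hVrec n, mul_div_cancel_left₀ _ (ne_of_gt (hVpos n))]
  have hED : Tendsto (fun n =>
      (∑ i, w n i * ((lam i - lam i1) * (lam iN - lam i)))
        / (∑ i, w n i * (c n - lam i) ^ 2)) atTop (𝓝 0) := by
    refine squeeze_zero (fun n => div_nonneg (hE n) (hD n).le)
      (g := fun n => (1 + (∑ i, w n i * ((lam i - lam i1) * (lam iN - lam i)))
        / (∑ i, w n i * (c n - lam i) ^ 2)) ^ 2 - 1) (fun n => ?_) ?_
    · have hx := div_nonneg (hE n) (hD n).le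
      nlinarith [hx]
    · have h2 := hsq.sub_const 1
      simpa using h2
  -- conclude
  have hbound : ∀ n, |c n + c (n + 1) - (lam i1 + lam iN)|
      ≤ (lam iN - lam i1) *
        ((∑ i, w n i * ((lam i - lam i1) * (lam iN - lam i)))
          / (∑ i, w n i * (c n - lam i) ^ 2)) := by
    intro n
    have h1 : c n + c (n + 1) - (lam i1 + lam iN)
        = (∑ i, w n i * (c n - lam i) * ((lam i - lam i1) * (lam iN - lam i)))
          / (∑ i, w n i * (c n - lam i) ^ 2) :=
      (eq_div_iff (ne_of_gt (hD n))).2 (hkey2 n)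
    rw [h1, abs_div, abs_of_pos (hD n), mul_div_assoc']
    exact (div_le_div_iff_of_pos_right (hD n)).2 (hTle n)
  have hdiff : Tendsto (fun n => c n + c (n + 1) - (lam i1 + lam iN)) atTop (𝓝 0) := by
    refine squeeze_zero_norm (a := fun n => (lam iN - lam i1) *
        ((∑ i, w n i * ((lam i - lam i1) * (lam iN - lam i)))
          / (∑ i, w n i * (c n - lam i) ^ 2))) (fun n => ?_) ?_
    · rw [Real.norm_eq_abs]; exact hbound n
    · have h2 := hED.const_mul (lam iN - lam i1)
      simpa using h2
  exact tendsto_sub_nhds_zero_iff.1 hdiff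

/-- Main work lemma, with abstract extreme indices. -/
private theorem mg_main
    (N : ℕ) (A : Matrix (Fin N) (Fin N) ℝ) (b : Fin N → ℝ)
    (lam : Fin N → ℝ) (v : Fin N → Fin N → ℝ)
    (i1 iN : Fin N) (hi_low : ∀ i, i1 ≤ i) (hi_high : ∀ i, i ≤ iN) (hi_lt : i1 < iN)
    (hlam0 : 0 < lam i1)
    (hmono : StrictMono lam)
    (heig : ∀ i, A.mulVec (v i) = lam i • v i)
    (horth : ∀ i j, v i ⬝ᵥ v j = if i = j then (1 : ℝ) else 0)
    (x g : ℕ → Fin N → ℝ) (alpha : ℕ → ℝ)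
    (hg : ∀ n, g n = A.mulVec (x n) - b)
    (halpha : ∀ n, alpha n =
      (g n ⬝ᵥ A.mulVec (g n)) / (g n ⬝ᵥ A.mulVec (A.mulVec (g n))))
    (hx : ∀ n, x (n + 1) = x n - alpha n • g n)
    (zeta : ℕ → Fin N → ℝ)
    (hzeta : ∀ n, g n = ∑ i, zeta n i • v i)
    (hz1 : zeta 0 i1 ≠ 0) (hzN : zeta 0 iN ≠ 0) :
    Tendsto (fun n => (1 / alpha (n - 1) + 1 / alpha n)⁻¹) atTop
      (𝓝 (1 / (lam i1 + lam iN))) := by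
  -- eigen-coordinate computations
  have hsum_dot : ∀ (d : Fin N → ℝ) (u : Fin N → ℝ),
      (∑ i, d i • v i) ⬝ᵥ u = ∑ i, d i * (v i ⬝ᵥ u) := by
    intro d u
    simp only [dotProduct, Finset.sum_apply, Pi.smul_apply, smul_eq_mul,
      Finset.sum_mul, Finset.mul_sum]
    rw [Finset.sum_comm]
    exact Finset.sum_congr rfl fun i _ => Finset.sum_congr rfl fun k _ => by ring
  have hdot_sum : ∀ (u : Fin N → ℝ) (e : Fin N → ℝ),
      u ⬝ᵥ (∑ j, e j • v j) = ∑ j, e j * (u ⬝ᵥ v j) := by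
    intro u e
    simp only [dotProduct, Finset.sum_apply, Pi.smul_apply, smul_eq_mul,
      Finset.sum_mul, Finset.mul_sum]
    rw [Finset.sum_comm]
    exact Finset.sum_congr rfl fun i _ => Finset.sum_congr rfl fun k _ => by ring
  have hdotv : ∀ (d : Fin N → ℝ) (j : Fin N), (∑ i, d i • v i) ⬝ᵥ v j = d j := by
    intro d j
    rw [hsum_dot]
    simp [horth]
  have hAsum : ∀ d : Fin N → ℝ,
      A.mulVec (∑ i, d i • v i) = ∑ i, (d i * lam i) • v i := by
    intro d
    have h1 : A.mulVec (∑ i, d i • v i) = ∑ i, A.mulVec (d i • v i) := by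
      simp only [← Matrix.mulVecLin_apply]
      exact map_sum _ _ _
    rw [h1]
    refine Finset.sum_congr rfl fun i _ => ?_
    rw [Matrix.mulVec_smul, heig i, smul_smul]
  have hdd : ∀ d e : Fin N → ℝ,
      (∑ i, d i • v i) ⬝ᵥ (∑ i, e i • v i) = ∑ i, d i * e i := by
    intro d e
    rw [hsum_dot]
    refine Finset.sum_congr rfl fun i _ => ?_
    rw [hdot_sum]
    simp [horth]
  have hAg : ∀ n, A.mulVec (g n) = ∑ i, (zeta n i * lam i) • v i := fun n => by
    rw [hzeta n]; exact hAsum _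
  have hAAg : ∀ n,
      A.mulVec (A.mulVec (g n)) = ∑ i, (zeta n i * lam i * lam i) • v i := fun n => by
    rw [hAg n]; exact hAsum _
  have hgAg : ∀ n, g n ⬝ᵥ A.mulVec (g n) = ∑ i, zeta n i ^ 2 * lam i := by
    intro n
    rw [hAg n, hzeta n, hdd]
    exact Finset.sum_congr rfl fun i _ => by ring
  have hgAAg : ∀ n, g n ⬝ᵥ A.mulVec (A.mulVec (g n))
      = ∑ i, zeta n i ^ 2 * lam i ^ 2 := by
    intro n
    rw [hAAg n, hzeta n, hdd]
    exact Finset.sum_congr rfl fun i _ => by ring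
  have halpha' : ∀ n, alpha n
      = (∑ i, zeta n i ^ 2 * lam i) / (∑ i, zeta n i ^ 2 * lam i ^ 2) := by
    intro n
    rw [halpha n, hgAg n, hgAAg n]
  -- gradient recurrence in coordinates
  have hgrec : ∀ n, g (n + 1) = g n - alpha n • A.mulVec (g n) := by
    intro n
    have h2 : A.mulVec (x n) - b = g n := (hg n).symm
    rw [hg (n + 1), hx n, Matrix.mulVec_sub, Matrix.mulVec_smul]
    rw [← h2]
    abel
  have hzrec : ∀ n i, zeta (n + 1) i = (1 - alpha n * lam i) * zeta n i := by
    intro n i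
    have h1 : g (n + 1) ⬝ᵥ v i = zeta (n + 1) i := by rw [hzeta (n + 1)]; exact hdotv _ i
    rw [hgrec n, sub_dotProduct, smul_dotProduct] at h1
    have h2 : g n ⬝ᵥ v i = zeta n i := by rw [hzeta n]; exact hdotv _ i
    have h3 : A.mulVec (g n) ⬝ᵥ v i = zeta n i * lam i := by
      rw [hAg n]; exact hdotv _ i
    rw [h2, h3] at h1
    rw [← h1]
    simp [smul_eq_mul]; ring
  -- eigenvalue facts
  have hlpos : ∀ i, 0 < lam i := fun i =>
    lt_of_lt_of_le hlam0 (hmono.monotone (hi_low i))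
  have hlle : ∀ i, lam i1 ≤ lam i := fun i => hmono.monotone (hi_low i)
  have hlge : ∀ i, lam i ≤ lam iN := fun i => hmono.monotone (hi_high i)
  have hllt : lam i1 < lam iN := hmono hi_lt
  -- the extreme coordinates never vanish
  have hnz : ∀ n, zeta n i1 ≠ 0 ∧ zeta n iN ≠ 0 := by
    intro n
    induction n with
    | zero => exact ⟨hz1, hzN⟩
    | succ n ih =>
      obtain ⟨h1, hN'⟩ := ih
      have hS1 : 0 < ∑ i, zeta n i ^ 2 * lam i :=
        Finset.sum_pos' (fun i _ => mul_nonneg (sq_nonneg _) (hlpos i).le)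
          ⟨i1, Finset.mem_univ _, mul_pos (sq_pos_of_ne_zero h1) (hlpos i1)⟩
      have hS2 : 0 < ∑ i, zeta n i ^ 2 * lam i ^ 2 :=
        Finset.sum_pos' (fun i _ => mul_nonneg (sq_nonneg _) (sq_nonneg _))
          ⟨i1, Finset.mem_univ _,
            mul_pos (sq_pos_of_ne_zero h1) (pow_pos (hlpos i1) 2)⟩
      have hkey1 : lam i1 * (∑ i, zeta n i ^ 2 * lam i)
          < ∑ i, zeta n i ^ 2 * lam i ^ 2 := by
        have e1 : (∑ i, zeta n i ^ 2 * lam i ^ 2)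
            - lam i1 * (∑ i, zeta n i ^ 2 * lam i)
            = ∑ i, zeta n i ^ 2 * lam i * (lam i - lam i1) := by
          rw [Finset.mul_sum, ← Finset.sum_sub_distrib]
          exact Finset.sum_congr rfl fun i _ => by ring
        have e2 : zeta n iN ^ 2 * lam iN * (lam iN - lam i1)
            ≤ ∑ i, zeta n i ^ 2 * lam i * (lam i - lam i1) :=
          Finset.single_le_sum
            (f := fun i => zeta n i ^ 2 * lam i * (lam i - lam i1))
            (fun i _ => mul_nonneg (mul_nonneg (sq_nonneg _) (hlpos i).le)
              (by linarith [hlle i])) (Finset.mem_univ iN)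
        have e3 : 0 < zeta n iN ^ 2 * lam iN * (lam iN - lam i1) :=
          mul_pos (mul_pos (sq_pos_of_ne_zero hN') (hlpos iN)) (by linarith)
        linarith
      have hkey2 : (∑ i, zeta n i ^ 2 * lam i ^ 2)
          < lam iN * (∑ i, zeta n i ^ 2 * lam i) := by
        have e1 : lam iN * (∑ i, zeta n i ^ 2 * lam i)
            - (∑ i, zeta n i ^ 2 * lam i ^ 2)
            = ∑ i, zeta n i ^ 2 * lam i * (lam iN - lam i) := by
          rw [Finset.mul_sum, ← Finset.sum_sub_distrib]
          exact Finset.sum_congr rfl fun i _ => by ring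
        have e2 : zeta n i1 ^ 2 * lam i1 * (lam iN - lam i1)
            ≤ ∑ i, zeta n i ^ 2 * lam i * (lam iN - lam i) :=
          Finset.single_le_sum
            (f := fun i => zeta n i ^ 2 * lam i * (lam iN - lam i))
            (fun i _ => mul_nonneg (mul_nonneg (sq_nonneg _) (hlpos i).le)
              (by linarith [hlge i])) (Finset.mem_univ i1)
        have e3 : 0 < zeta n i1 ^ 2 * lam i1 * (lam iN - lam i1) :=
          mul_pos (mul_pos (sq_pos_of_ne_zero h1) (hlpos i1)) (by linarith)
        linarith
      have hf1 : 0 < 1 - alpha n * lam i1 := by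
        rw [halpha' n, div_mul_eq_mul_div]
        have h4 : (∑ i, zeta n i ^ 2 * lam i) * lam i1
            / (∑ i, zeta n i ^ 2 * lam i ^ 2) < 1 :=
          (div_lt_one hS2).2 (by linarith [hkey1])
        linarith
      have hfN : 1 - alpha n * lam iN < 0 := by
        rw [halpha' n, div_mul_eq_mul_div]
        have h4 : 1 < (∑ i, zeta n i ^ 2 * lam i) * lam iN
            / (∑ i, zeta n i ^ 2 * lam i ^ 2) :=
          (one_lt_div hS2).2 (by linarith [hkey2])
        linarith
      constructor
      · rw [hzrec n i1]; exact mul_ne_zero (ne_of_gt hf1) h1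
      · rw [hzrec n iN]; exact mul_ne_zero (ne_of_lt hfN) hN'
  -- weights and means
  have hS1 : ∀ n, 0 < ∑ i, zeta n i ^ 2 * lam i := fun n =>
    Finset.sum_pos' (fun i _ => mul_nonneg (sq_nonneg _) (hlpos i).le)
      ⟨i1, Finset.mem_univ _, mul_pos (sq_pos_of_ne_zero (hnz n).1) (hlpos i1)⟩
  have hS2 : ∀ n, 0 < ∑ i, zeta n i ^ 2 * lam i ^ 2 := fun n =>
    Finset.sum_pos' (fun i _ => mul_nonneg (sq_nonneg _) (sq_nonneg _))
      ⟨i1, Finset.mem_univ _,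
        mul_pos (sq_pos_of_ne_zero (hnz n).1) (pow_pos (hlpos i1) 2)⟩
  set w : ℕ → Fin N → ℝ := fun n i => zeta n i ^ 2 * lam i with hw_def
  set c : ℕ → ℝ := fun n =>
    (∑ i, zeta n i ^ 2 * lam i ^ 2) / (∑ i, zeta n i ^ 2 * lam i) with hc_def
  have hca : ∀ n, alpha n * c n = 1 := by
    intro n
    rw [halpha' n, hc_def]
    field_simp
    rw [mul_comm]
    exact div_self (ne_of_gt (mul_pos (hS2 n) (hS1 n)))
  have hcw : ∀ n, c n * (∑ i, w n i) = ∑ i, w n i * lam i := by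
    intro n
    have e1 : (∑ i, w n i) = ∑ i, zeta n i ^ 2 * lam i := rfl
    have e2 : (∑ i, w n i * lam i) = ∑ i, zeta n i ^ 2 * lam i ^ 2 :=
      Finset.sum_congr rfl fun i _ => by rw [hw_def]; ring
    rw [e1, e2, hc_def]
    exact div_mul_cancel₀ _ (ne_of_gt (hS1 n))
  have hwrec : ∀ n i, w (n + 1) i * (c n) ^ 2 = w n i * (c n - lam i) ^ 2 := by
    intro n i
    have hfc : (1 - alpha n * lam i) * c n = c n - lam i := by
      calc (1 - alpha n * lam i) * c n = c n - lam i * (alpha n * c n) := by ring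
        _ = c n - lam i := by rw [hca n]; ring
    calc w (n + 1) i * (c n) ^ 2
        = ((1 - alpha n * lam i) * c n) ^ 2 * (zeta n i ^ 2 * lam i) := by
          rw [hw_def]
          simp only []
          rw [hzrec n i]
          ring
      _ = (zeta n i ^ 2 * lam i) * (c n - lam i) ^ 2 := by rw [hfc]; ring
      _ = w n i * (c n - lam i) ^ 2 := by rw [hw_def]
  have hcc : Tendsto (fun n => c n + c (n + 1)) atTop (𝓝 (lam i1 + lam iN)) := by
    refine mg_core lam i1 iN hlam0 hlle hlge hllt w
      (fun n i => mul_nonneg (sq_nonneg _) (hlpos i).le)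
      (fun n => mul_pos (sq_pos_of_ne_zero (hnz n).1) (hlpos i1))
      (fun n => mul_pos (sq_pos_of_ne_zero (hnz n).2) (hlpos iN))
      c hcw hwrec
  -- convert to the stated limit
  have hinv : ∀ m, 1 / alpha m = c m := by
    intro m
    rw [halpha' m, one_div, inv_div, hc_def]
  have hshift : Tendsto (fun n => c (n - 1) + c n) atTop (𝓝 (lam i1 + lam iN)) := by
    rw [← tendsto_add_atTop_iff_nat 1]
    simp only [Nat.add_sub_cancel]
    exact hcc
  have hsum_ne : lam i1 + lam iN ≠ 0 := by
    have := hlpos iN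
    positivity
  have hfin := hshift.inv₀ hsum_ne
  rw [show (lam i1 + lam iN)⁻¹ = 1 / (lam i1 + lam iN) from (one_div _).symm] at hfin
  simp only [hinv]
  exact hfin

theorem mg_A2_steplength_limit
    (N : ℕ) (hN : 2 ≤ N)
    (A : Matrix (Fin N) (Fin N) ℝ) (b : Fin N → ℝ)
    (hA : A.PosDef)
    (lam : Fin N → ℝ) (v : Fin N → Fin N → ℝ)
    (hlam0 : 0 < lam ⟨0, by omega⟩)
    (hmono : StrictMono lam)
    (heig : ∀ i, A.mulVec (v i) = lam i • v i)
    (horth : ∀ i j, v i ⬝ᵥ v j = if i = j then (1 : ℝ) else 0)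
    (x g : ℕ → Fin N → ℝ) (alpha : ℕ → ℝ)
    (hg : ∀ n, g n = A.mulVec (x n) - b)
    (halpha : ∀ n, alpha n =
      (g n ⬝ᵥ A.mulVec (g n)) / (g n ⬝ᵥ A.mulVec (A.mulVec (g n))))
    (hx : ∀ n, x (n + 1) = x n - alpha n • g n)
    (zeta : ℕ → Fin N → ℝ)
    (hzeta : ∀ n, g n = ∑ i, zeta n i • v i)
    (hz1 : zeta 0 ⟨0, by omega⟩ ≠ 0)
    (hzN : zeta 0 ⟨N - 1, by omega⟩ ≠ 0) :
    Tendsto (fun n => (1 / alpha (n - 1) + 1 / alpha n)⁻¹) atTop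
      (𝓝 (1 / (lam ⟨0, by omega⟩ + lam ⟨N - 1, by omega⟩))) := by
  refine mg_main N A b lam v ⟨0, by omega⟩ ⟨N - 1, by omega⟩
    (fun i => ?_) (fun i => ?_) ?_ hlam0 hmono heig horth x g alpha hg halpha hx
    zeta hzeta hz1 hzN
  · simp [Fin.le_def]
  · have h2 := i.isLt
    simp only [Fin.le_def]
    omega
  · simp only [Fin.lt_def]
    omega
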